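/- arXiv:1706.07082 — 2 statements merged into one kernel-verified Lean document; each statement's English description precedes it below -/
import Mathlib

section
/- If S is a rectangular band semigroup and ω is a separable weight on S ≅ L × R (L a left zero semigroup, R a right zero semigroup), then ℓ¹(S, ω) is biprojective. -/
open scoped TensorProduct
open Filter
open scoped Classical

/-- A weight on a semigroup: strictly positive and submultiplicative. -/
def IsWeight {S : Type*} [Mul S] (ω : S → ℝ) : Prop :=
  (∀ s, 0 < ω s) ∧ ∀ s t, ω (s * t) ≤ ω s * ω t

/-- A characterization of the Beurling algebra `ℓ¹(S, ω)`: a Banach algebra `A`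
together with point masses `delta` and coefficient functionals such that every
element is the ℓ¹-sum of its coefficients against the point masses, with the
weighted ℓ¹-norm, and `delta` is multiplicative (`δ_s * δ_t = δ_{st}`). -/
structure BeurlingStructure (S : Type*) [Mul S] (ω : S → ℝ) (A : Type*)
    [NormedRing A] [NormedAlgebra ℂ A] where
  delta : S → A
  coeff : A →ₗ[ℂ] (S → ℂ)
  delta_mul : ∀ s t : S, delta s * delta t = delta (s * t)
  coeff_delta : ∀ s t : S, coeff (delta s) t = if t = s then 1 else 0
  hasSum_coeff : ∀ a : A, HasSum (fun s => coeff a s • delta s) a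
  norm_eq : ∀ a : A, ‖a‖ = ∑' s, ‖coeff a s‖ * ω s

/-- A pair of commuting continuous left/right module actions of a Banach algebra,
making `E` a Banach `A`-bimodule. -/
def IsBimodule {A : Type*} [NormedRing A] [NormedAlgebra ℂ A]
    {E : Type*} [NormedAddCommGroup E] [NormedSpace ℂ E]
    (l r : A →L[ℂ] E →L[ℂ] E) : Prop :=
  (∀ a b : A, l (a * b) = (l a).comp (l b)) ∧
  (∀ a b : A, r (a * b) = (r b).comp (r a)) ∧
  (∀ a b : A, (l a).comp (r b) = (r b).comp (l a))

/-- Amenability of a Banach algebra: every bounded derivation into the dual of a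
Banach bimodule is inner.  (The dual bimodule actions are `(a·f)(x) = f(x·a)` and
`(f·a)(x) = f(a·x)`.) -/
def IsAmenable (A : Type*) [NormedRing A] [NormedAlgebra ℂ A] : Prop :=
  ∀ (E : Type) [NormedAddCommGroup E] [NormedSpace ℂ E]
    (l r : A →L[ℂ] E →L[ℂ] E), IsBimodule l r →
    ∀ D : A →L[ℂ] (E →L[ℂ] ℂ),
      (∀ a b : A, D (a * b) = (D b).comp (r a) + (D a).comp (l b)) →
      ∃ f : E →L[ℂ] ℂ, ∀ a : A, D a = f.comp (r a) - f.comp (l a)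

/-- The projective tensor norm of an element of the algebraic tensor product. -/
noncomputable def projNorm (A B : Type*) [NormedAddCommGroup A] [NormedSpace ℂ A]
    [NormedAddCommGroup B] [NormedSpace ℂ B] (u : A ⊗[ℂ] B) : ℝ :=
  sInf {r : ℝ | ∃ (n : ℕ) (f : Fin n → A) (g : Fin n → B),
    u = ∑ i, f i ⊗ₜ[ℂ] g i ∧ r = ∑ i, ‖f i‖ * ‖g i‖}

/-- Left action `a • (x ⊗ y) = (a*x) ⊗ y` on `A ⊗ A`. -/
noncomputable def tmulLeft {A : Type*} [NormedRing A] [NormedAlgebra ℂ A] (a : A) :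
    A ⊗[ℂ] A →ₗ[ℂ] A ⊗[ℂ] A :=
  TensorProduct.map (LinearMap.mulLeft ℂ a) LinearMap.id

/-- Right action `(x ⊗ y) • a = x ⊗ (y*a)` on `A ⊗ A`. -/
noncomputable def tmulRight {A : Type*} [NormedRing A] [NormedAlgebra ℂ A] (a : A) :
    A ⊗[ℂ] A →ₗ[ℂ] A ⊗[ℂ] A :=
  TensorProduct.map LinearMap.id (LinearMap.mulRight ℂ a)

/-- Pseudo-amenability: existence of an approximate diagonal.  (Since the algebraic
tensor product is dense in `A ⊗̂ A` in the projective norm, the approximate diagonal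
may be taken in the algebraic tensor product, with the module-action conditions
measured in the projective tensor norm.) -/
def IsPseudoAmenable (A : Type*) [NormedRing A] [NormedAlgebra ℂ A] : Prop :=
  ∃ (ι : Type) (l : Filter ι), l.NeBot ∧ ∃ m : ι → A ⊗[ℂ] A,
    (∀ a : A, Tendsto (fun i => projNorm A A (tmulLeft a (m i) - tmulRight a (m i)))
        l (nhds 0)) ∧
    (∀ a : A, Tendsto (fun i => a * LinearMap.mul' ℂ A (m i)) l (nhds a))

/-- A witness for biprojectivity of `A`: a realization `X` of the completed projective
tensor product `A ⊗̂ A` (with its bimodule actions and multiplication map `pihat`),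
together with a bounded bimodule homomorphism `rho : A → A ⊗̂ A` with `π ∘ ρ = id`. -/
structure BiprojectiveWitness (A : Type*) [NormedRing A] [NormedAlgebra ℂ A] where
  X : Type
  [grp : NormedAddCommGroup X]
  [mod : NormedSpace ℂ X]
  [compl : CompleteSpace X]
  incl : A ⊗[ℂ] A →ₗ[ℂ] X
  dense_incl : DenseRange incl
  norm_incl : ∀ u, ‖incl u‖ = projNorm A A u
  lact : A →L[ℂ] X →L[ℂ] X
  ract : A →L[ℂ] X →L[ℂ] X
  bimod : IsBimodule lact ract
  lact_incl : ∀ (a : A) u, lact a (incl u) = incl (tmulLeft a u)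
  ract_incl : ∀ (a : A) u, ract a (incl u) = incl (tmulRight a u)
  pihat : X →L[ℂ] A
  pihat_incl : ∀ u, pihat (incl u) = LinearMap.mul' ℂ A u
  rho : A →L[ℂ] X
  rho_left : ∀ a b : A, rho (a * b) = lact a (rho b)
  rho_right : ∀ a b : A, rho (a * b) = ract b (rho a)
  pihat_rho : ∀ a : A, pihat (rho a) = a

attribute [instance] BiprojectiveWitness.grp BiprojectiveWitness.mod
  BiprojectiveWitness.compl

/-- `A` is biprojective. -/
def IsBiprojective (A : Type*) [NormedRing A] [NormedAlgebra ℂ A] : Prop :=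
  Nonempty (BiprojectiveWitness A)

/-- A witness for biflatness of `A`: a realization `X` of `A ⊗̂ A` together with a
bounded bimodule homomorphism `rho : A → (A ⊗̂ A)**` with `π** ∘ ρ = k_A`. -/
structure BiflatWitness (A : Type*) [NormedRing A] [NormedAlgebra ℂ A] where
  X : Type
  [grp : NormedAddCommGroup X]
  [mod : NormedSpace ℂ X]
  [compl : CompleteSpace X]
  incl : A ⊗[ℂ] A →ₗ[ℂ] X
  dense_incl : DenseRange incl
  norm_incl : ∀ u, ‖incl u‖ = projNorm A A u
  lact : A →L[ℂ] X →L[ℂ] X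
  ract : A →L[ℂ] X →L[ℂ] X
  bimod : IsBimodule lact ract
  lact_incl : ∀ (a : A) u, lact a (incl u) = incl (tmulLeft a u)
  ract_incl : ∀ (a : A) u, ract a (incl u) = incl (tmulRight a u)
  pihat : X →L[ℂ] A
  pihat_incl : ∀ u, pihat (incl u) = LinearMap.mul' ℂ A u
  rho : A →L[ℂ] ((X →L[ℂ] ℂ) →L[ℂ] ℂ)
  rho_left : ∀ (a b : A) (f : X →L[ℂ] ℂ), rho (a * b) f = rho b (f.comp (lact a))
  rho_right : ∀ (a b : A) (f : X →L[ℂ] ℂ), rho (a * b) f = rho a (f.comp (ract b))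
  pihat_rho : ∀ (a : A) (g : A →L[ℂ] ℂ), rho a (g.comp pihat) = g a

/-- `A` is biflat. -/
def IsBiflat (A : Type*) [NormedRing A] [NormedAlgebra ℂ A] : Prop :=
  Nonempty (BiflatWitness A)

/-- A realization of the completed projective tensor product `A ⊗̂ B` of two Banach
spaces: a Banach space in which the algebraic tensor product sits densely and
isometrically for the projective tensor norm. -/
structure ProjTensorWitness (A B : Type*) [NormedAddCommGroup A] [NormedSpace ℂ A]
    [NormedAddCommGroup B] [NormedSpace ℂ B] where
  X : Type
  [grp : NormedAddCommGroup X]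
  [mod : NormedSpace ℂ X]
  [compl : CompleteSpace X]
  incl : A ⊗[ℂ] B →ₗ[ℂ] X
  dense_incl : DenseRange incl
  norm_incl : ∀ u, ‖incl u‖ = projNorm A B u

attribute [instance] ProjTensorWitness.grp ProjTensorWitness.mod ProjTensorWitness.compl

/-- The principal ideal `S¹ s S¹` generated by `s`, inside the unitization `S¹`. -/
def principalIdeal {S : Type*} [Semigroup S] (s : S) : Set (WithOne S) :=
  {x | ∃ u v : WithOne S, x = u * (s : WithOne S) * v}

/-- The Green-type relation `s τ t ↔ S¹sS¹ = S¹tS¹`. -/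
def bandTau {S : Type*} [Semigroup S] (s t : S) : Prop :=
  principalIdeal s = principalIdeal t

/-- Amenability of a (topological) group: existence of a left-invariant mean on the
bounded continuous functions. -/
def GroupIsAmenable (G : Type*) [Group G] [TopologicalSpace G] [IsTopologicalGroup G] :
    Prop :=
  ∃ m : BoundedContinuousFunction G ℝ →L[ℝ] ℝ,
    m 1 = 1 ∧ (∀ f, 0 ≤ f → 0 ≤ m f) ∧
    ∀ (g : G) (f : BoundedContinuousFunction G ℝ),
      m (f.compContinuous ⟨fun x => g * x, continuous_mul_left g⟩) = m f

/-- A characterization of the Beurling algebra `L¹(G, ω)` of a locally compact group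
with Haar measure `μ`: a Banach algebra `A` whose elements are represented by
`ω`-integrable functions on `G`, with the weighted `L¹` norm and convolution product. -/
structure GroupBeurlingStructure (G : Type*) [Group G] [MeasurableSpace G]
    (μ : MeasureTheory.Measure G) (ω : G → ℝ) (A : Type*) [NormedRing A] [NormedAlgebra ℂ A] where
  toFun : A → G → ℂ
  integrable : ∀ a, MeasureTheory.Integrable (fun g => ‖toFun a g‖ * ω g) μ
  map_add : ∀ a b : A, toFun (a + b) =ᶠ[MeasureTheory.ae μ] toFun a + toFun b
  map_smul : ∀ (c : ℂ) (a : A), toFun (c • a) =ᶠ[MeasureTheory.ae μ] c • toFun a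
  eq_zero : ∀ a : A, toFun a =ᶠ[MeasureTheory.ae μ] 0 → a = 0
  norm_eq : ∀ a : A, ‖a‖ = ∫ g, ‖toFun a g‖ * ω g ∂μ
  map_mul : ∀ a b : A, toFun (a * b) =ᶠ[MeasureTheory.ae μ]
    fun x => ∫ t, toFun a t * toFun b (t⁻¹ * x) ∂μ
  surjective : ∀ f : G → ℂ, Measurable f →
    MeasureTheory.Integrable (fun g => ‖f g‖ * ω g) μ → ∃ a, toFun a =ᶠ[MeasureTheory.ae μ] f

/-! Write `S = L × R`, so that `(l, r) (l', r') = (l, r')`, and fix `l₀ ∈ L`, `r₀ ∈ R`. The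
family `x_(l,r) = δ_(l,r₀) ⊗ δ_(l₀,r)` satisfies `δ_s · x_t = x_(st)`, `x_s · δ_t = x_(st)` and
`π(x_s) = δ_s`, and, because the weight is separable,
`‖x_(l,r)‖ ≤ ω_L(l) ω_R(r₀) ω_L(l₀) ω_R(r) = ω_L(l₀) ω_R(r₀) · ω(l,r)`. A family bounded by a
multiple of `ω` extends from the point masses to a bounded operator on `ℓ¹(S, ω)`, and the
identities extend with it by density, giving the splitting `ρ`. -/

open UniformSpace (Completion)

theorem TensorProduct.exists_eq_sum_fin_tmul {R M N : Type*} [CommSemiring R]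
    [AddCommMonoid M] [Module R M] [AddCommMonoid N] [Module R N] (u : M ⊗[R] N) :
    ∃ (n : ℕ) (f : Fin n → M) (g : Fin n → N), u = ∑ i, f i ⊗ₜ[R] g i := by
  induction u using TensorProduct.induction_on with
  | zero => exact ⟨0, Fin.elim0, Fin.elim0, by simp⟩
  | tmul x y => exact ⟨1, fun _ => x, fun _ => y, by simp⟩
  | add u v hu hv =>
    obtain ⟨n, f, g, rfl⟩ := hu
    obtain ⟨m, f', g', rfl⟩ := hv
    exact ⟨n + m, Fin.append f f', Fin.append g g', by simp [Fin.sum_univ_add]⟩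

section ProjectiveNorm

variable {V W : Type*} [NormedAddCommGroup V] [NormedSpace ℂ V]
  [NormedAddCommGroup W] [NormedSpace ℂ W]

theorem projNorm_le_sum {u : V ⊗[ℂ] W} {n : ℕ} {f : Fin n → V} {g : Fin n → W}
    (hu : u = ∑ i, f i ⊗ₜ[ℂ] g i) : projNorm V W u ≤ ∑ i, ‖f i‖ * ‖g i‖ :=
  csInf_le ⟨0, by rintro _ ⟨n, f, g, -, rfl⟩; positivity⟩ ⟨n, f, g, hu, rfl⟩

theorem le_mul_projNorm {u : V ⊗[ℂ] W} {C x : ℝ} (hC : 0 ≤ C)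
    (h : ∀ (n : ℕ) (f : Fin n → V) (g : Fin n → W), u = ∑ i, f i ⊗ₜ[ℂ] g i →
      x ≤ C * ∑ i, ‖f i‖ * ‖g i‖) :
    x ≤ C * projNorm V W u := by
  obtain ⟨n, f, g, hu⟩ := u.exists_eq_sum_fin_tmul
  rw [projNorm, ← smul_eq_mul, ← Real.sInf_smul_of_nonneg hC]
  refine le_csInf (Set.Nonempty.smul_set ⟨_, n, f, g, hu, rfl⟩) ?_
  rintro _ ⟨_, ⟨n, f, g, hu, rfl⟩, rfl⟩
  exact h n f g hu

theorem projNorm_tmul_le (x : V) (y : W) : projNorm V W (x ⊗ₜ[ℂ] y) ≤ ‖x‖ * ‖y‖ := by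
  simpa using projNorm_le_sum (f := fun _ : Fin 1 => x) (g := fun _ => y) (by simp)

theorem projNorm_smul_le (c : ℂ) (u : V ⊗[ℂ] W) :
    projNorm V W (c • u) ≤ ‖c‖ * projNorm V W u :=
  le_mul_projNorm (norm_nonneg c) fun n f g hu =>
    (projNorm_le_sum (f := c • f) (g := g)
      (by simp [hu, Finset.smul_sum, TensorProduct.smul_tmul'])).trans_eq
        (by simp [norm_smul, Finset.mul_sum, mul_assoc])

theorem projNorm_zero : projNorm V W 0 = 0 :=
  le_antisymm (by simpa using projNorm_smul_le (0 : ℂ) 0) <| by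
    simpa using le_mul_projNorm (u := (0 : V ⊗[ℂ] W)) (C := 1) (x := 0) zero_le_one
      fun _ _ _ _ => by positivity

theorem projNorm_add_le (u v : V ⊗[ℂ] W) :
    projNorm V W (u + v) ≤ projNorm V W u + projNorm V W v := by
  have key : ∀ (n : ℕ) (f : Fin n → V) (g : Fin n → W), u = ∑ i, f i ⊗ₜ[ℂ] g i →
      ∀ (m : ℕ) (f' : Fin m → V) (g' : Fin m → W), v = ∑ i, f' i ⊗ₜ[ℂ] g' i →
      projNorm V W (u + v) ≤ ∑ i, ‖f i‖ * ‖g i‖ + ∑ i, ‖f' i‖ * ‖g' i‖ := by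
    rintro n f g rfl m f' g' rfl
    simpa [Fin.sum_univ_add] using
      projNorm_le_sum (f := Fin.append f f') (g := Fin.append g g') (by simp [Fin.sum_univ_add])
  have hv : projNorm V W (u + v) - projNorm V W u ≤ 1 * projNorm V W v :=
    le_mul_projNorm zero_le_one fun m f' g' hv => by
      have : projNorm V W (u + v) - ∑ i, ‖f' i‖ * ‖g' i‖ ≤ 1 * projNorm V W u :=
        le_mul_projNorm zero_le_one fun n f g hu => by linarith [key n f g hu m f' g' hv]
      linarith
  linarith

noncomputable def projSeminorm : Seminorm ℂ (V ⊗[ℂ] W) :=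
  Seminorm.ofSMulLE (projNorm V W) projNorm_zero projNorm_add_le projNorm_smul_le

theorem norm_le_mul_projNorm {Z : Type*} [SeminormedAddCommGroup Z] [Module ℂ Z]
    (φ : V ⊗[ℂ] W →ₗ[ℂ] Z) {C : ℝ} (hC : 0 ≤ C) (h : ∀ x y, ‖φ (x ⊗ₜ y)‖ ≤ C * (‖x‖ * ‖y‖))
    (u : V ⊗[ℂ] W) : ‖φ u‖ ≤ C * projNorm V W u :=
  le_mul_projNorm hC fun n f g hu => by
    rw [hu, map_sum, Finset.mul_sum]
    exact (norm_sum_le _ _).trans (Finset.sum_le_sum fun i _ => h (f i) (g i))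

end ProjectiveNorm

section CompletedTensor

variable (V W : Type*) [NormedAddCommGroup V] [NormedSpace ℂ V]
  [NormedAddCommGroup W] [NormedSpace ℂ W]

/-- Only a local instance: the algebraic tensor product carries other natural norms. -/
noncomputable abbrev projSeminormedAddCommGroup : SeminormedAddCommGroup (V ⊗[ℂ] W) :=
  (projSeminorm (V := V) (W := W)).toAddGroupSeminorm.toSeminormedAddCommGroup

attribute [local instance] projSeminormedAddCommGroup

noncomputable abbrev projNormedSpace : NormedSpace ℂ (V ⊗[ℂ] W) where
  norm_smul_le c u := (map_smul_eq_mul projSeminorm c u).le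

attribute [local instance] projNormedSpace

/-- The completed projective tensor product `V ⊗̂ W`. -/
def ProjTensor : Type _ := Completion (V ⊗[ℂ] W)

noncomputable instance : NormedAddCommGroup (ProjTensor V W) :=
  inferInstanceAs (NormedAddCommGroup (Completion _))

noncomputable instance : NormedSpace ℂ (ProjTensor V W) :=
  inferInstanceAs (NormedSpace ℂ (Completion _))

instance : CompleteSpace (ProjTensor V W) :=
  inferInstanceAs (CompleteSpace (Completion _))

variable {V W}

namespace ProjTensor

noncomputable def incl : V ⊗[ℂ] W →ₗ[ℂ] ProjTensor V W :=
  (Completion.toComplL : V ⊗[ℂ] W →L[ℂ] Completion (V ⊗[ℂ] W)).toLinearMap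

theorem norm_incl (u : V ⊗[ℂ] W) : ‖incl u‖ = projNorm V W u :=
  Completion.norm_coe u

theorem denseRange_incl : DenseRange (incl : V ⊗[ℂ] W →ₗ[ℂ] ProjTensor V W) :=
  Completion.denseRange_coe

end ProjTensor

end CompletedTensor

namespace ProjTensor

variable {V W V' W' Z : Type*} [NormedAddCommGroup V] [NormedSpace ℂ V]
  [NormedAddCommGroup W] [NormedSpace ℂ W] [NormedAddCommGroup V'] [NormedSpace ℂ V']
  [NormedAddCommGroup W'] [NormedSpace ℂ W'] [NormedAddCommGroup Z] [NormedSpace ℂ Z]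

theorem ext_tmul {F G : ProjTensor V W →L[ℂ] Z}
    (h : ∀ x y, F (incl (x ⊗ₜ y)) = G (incl (x ⊗ₜ y))) : F = G := by
  have h' : F.toLinearMap ∘ₗ incl = G.toLinearMap ∘ₗ incl := TensorProduct.ext' h
  exact ContinuousLinearMap.coeFn_injective <|
    denseRange_incl.equalizer F.continuous G.continuous <| funext (LinearMap.congr_fun h')

theorem norm_incl_map_le (f : V →L[ℂ] V') (g : W →L[ℂ] W') (u : V ⊗[ℂ] W) :
    ‖incl (TensorProduct.map f.toLinearMap g.toLinearMap u)‖ ≤ ‖f‖ * ‖g‖ * ‖incl u‖ := by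
  rw [norm_incl u]
  refine norm_le_mul_projNorm (incl ∘ₗ TensorProduct.map f.toLinearMap g.toLinearMap)
    (C := ‖f‖ * ‖g‖) (by positivity) (fun x y => ?_) u
  calc ‖incl (f x ⊗ₜ[ℂ] g y)‖ ≤ ‖f x‖ * ‖g y‖ := (norm_incl _).trans_le (projNorm_tmul_le _ _)
    _ ≤ ‖f‖ * ‖x‖ * (‖g‖ * ‖y‖) := by gcongr <;> exact ContinuousLinearMap.le_opNorm _ _
    _ = ‖f‖ * ‖g‖ * (‖x‖ * ‖y‖) := by ring

noncomputable def map (f : V →L[ℂ] V') (g : W →L[ℂ] W') :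
    ProjTensor V W →L[ℂ] ProjTensor V' W' :=
  (incl ∘ₗ TensorProduct.map f.toLinearMap g.toLinearMap).extendOfNorm incl

theorem map_incl (f : V →L[ℂ] V') (g : W →L[ℂ] W') (u : V ⊗[ℂ] W) :
    map f g (incl u) = incl (TensorProduct.map f.toLinearMap g.toLinearMap u) :=
  LinearMap.extendOfNorm_eq denseRange_incl ⟨_, norm_incl_map_le f g⟩ u

theorem map_incl_tmul (f : V →L[ℂ] V') (g : W →L[ℂ] W') (x : V) (y : W) :
    map f g (incl (x ⊗ₜ y)) = incl (f x ⊗ₜ g y) :=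
  map_incl f g _

theorem norm_map_le (f : V →L[ℂ] V') (g : W →L[ℂ] W') : ‖map f g‖ ≤ ‖f‖ * ‖g‖ :=
  LinearMap.opNorm_extendOfNorm_le denseRange_incl (by positivity) (norm_incl_map_le f g)

noncomputable def mapL :
    (V →L[ℂ] V') →L[ℂ] (W →L[ℂ] W') →L[ℂ] ProjTensor V W →L[ℂ] ProjTensor V' W' :=
  LinearMap.mkContinuous₂
    (LinearMap.mk₂ ℂ map
      (fun f f' g => ext_tmul fun x y => by simp [map_incl_tmul, TensorProduct.add_tmul])
      (fun c f g => ext_tmul fun x y => by simp [map_incl_tmul, ← TensorProduct.smul_tmul'])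
      (fun f g g' => ext_tmul fun x y => by simp [map_incl_tmul, TensorProduct.tmul_add])
      (fun c f g => ext_tmul fun x y => by simp [map_incl_tmul, TensorProduct.tmul_smul]))
    1 fun f g => by simpa using norm_map_le f g

variable {A : Type*} [NormedRing A] [NormedAlgebra ℂ A]

noncomputable def mulLeft : A →L[ℂ] ProjTensor A A →L[ℂ] ProjTensor A A :=
  (mapL.flip (ContinuousLinearMap.id ℂ A)).comp (ContinuousLinearMap.mul ℂ A)

noncomputable def mulRight : A →L[ℂ] ProjTensor A A →L[ℂ] ProjTensor A A :=
  (mapL (ContinuousLinearMap.id ℂ A)).comp (ContinuousLinearMap.mul ℂ A).flip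

theorem mulLeft_incl (a : A) (u : A ⊗[ℂ] A) : mulLeft a (incl u) = incl (tmulLeft a u) :=
  map_incl _ _ u

theorem mulRight_incl (a : A) (u : A ⊗[ℂ] A) : mulRight a (incl u) = incl (tmulRight a u) :=
  map_incl _ _ u

theorem mulLeft_incl_tmul (a x y : A) : mulLeft a (incl (x ⊗ₜ y)) = incl ((a * x) ⊗ₜ y) :=
  map_incl_tmul _ _ x y

theorem mulRight_incl_tmul (a x y : A) : mulRight a (incl (x ⊗ₜ y)) = incl (x ⊗ₜ (y * a)) :=
  map_incl_tmul _ _ x y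

theorem isBimodule_mulLeft_mulRight : IsBimodule (mulLeft (A := A)) mulRight :=
  ⟨fun a b => ext_tmul fun x y => by simp [mulLeft_incl_tmul, mul_assoc],
    fun a b => ext_tmul fun x y => by simp [mulRight_incl_tmul, mul_assoc],
    fun a b => ext_tmul fun x y => by simp [mulLeft_incl_tmul, mulRight_incl_tmul]⟩

theorem norm_mul'_le_norm_incl (u : A ⊗[ℂ] A) : ‖LinearMap.mul' ℂ A u‖ ≤ 1 * ‖incl u‖ := by
  rw [norm_incl]
  exact norm_le_mul_projNorm _ zero_le_one (fun x y => by simpa using norm_mul_le x y) u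

variable [CompleteSpace A]

noncomputable def mul : ProjTensor A A →L[ℂ] A :=
  (LinearMap.mul' ℂ A).extendOfNorm incl

theorem mul_incl (u : A ⊗[ℂ] A) : mul (incl u) = LinearMap.mul' ℂ A u :=
  LinearMap.extendOfNorm_eq denseRange_incl ⟨1, norm_mul'_le_norm_incl⟩ u

theorem mul_incl_tmul (x y : A) : mul (incl (x ⊗ₜ y)) = x * y := by
  simp [mul_incl]

end ProjTensor

theorem isBiprojective_of_splitting {A : Type} [NormedRing A] [NormedAlgebra ℂ A]
    [CompleteSpace A] (ρ : A →L[ℂ] ProjTensor A A)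
    (hl : ∀ a b, ρ (a * b) = ProjTensor.mulLeft a (ρ b))
    (hr : ∀ a b, ρ (a * b) = ProjTensor.mulRight b (ρ a))
    (hπ : ∀ a, ProjTensor.mul (ρ a) = a) : IsBiprojective A :=
  ⟨{ X := ProjTensor A A
     incl := ProjTensor.incl
     dense_incl := ProjTensor.denseRange_incl
     norm_incl := ProjTensor.norm_incl
     lact := ProjTensor.mulLeft
     ract := ProjTensor.mulRight
     bimod := ProjTensor.isBimodule_mulLeft_mulRight
     lact_incl := ProjTensor.mulLeft_incl
     ract_incl := ProjTensor.mulRight_incl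
     pihat := ProjTensor.mul
     pihat_incl := ProjTensor.mul_incl
     rho := ρ
     rho_left := hl
     rho_right := hr
     pihat_rho := hπ }⟩

namespace BeurlingStructure

variable {S : Type*} [Mul S] {ω : S → ℝ} {A : Type*} [NormedRing A] [NormedAlgebra ℂ A]
  (B : BeurlingStructure S ω A)

theorem coeff_sum_smul_delta (c : S → ℂ) (F : Finset S) :
    B.coeff (∑ s ∈ F, c s • B.delta s) = fun t => if t ∈ F then c t else 0 := by
  ext t
  simp [B.coeff_delta, Finset.sum_apply]

theorem norm_sum_smul_delta (c : S → ℂ) (F : Finset S) :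
    ‖∑ s ∈ F, c s • B.delta s‖ = ∑ s ∈ F, ‖c s‖ * ω s := by
  rw [B.norm_eq, coeff_sum_smul_delta, tsum_eq_sum (s := F) fun t ht => by simp [ht]]
  exact Finset.sum_congr rfl fun t ht => by simp [ht]

theorem norm_delta (s : S) : ‖B.delta s‖ = ω s := by
  simpa using B.norm_sum_smul_delta (fun _ => 1) {s}

theorem hasSum_norm_coeff_mul (a : A) : HasSum (fun s => ‖B.coeff a s‖ * ω s) ‖a‖ := by
  have h := (continuous_norm.tendsto a).comp (B.hasSum_coeff a)
  simp only [Function.comp_def, norm_sum_smul_delta] at h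
  exact h

variable {Y : Type*} [NormedAddCommGroup Y] [NormedSpace ℂ Y]

theorem ext_delta {F G : A →L[ℂ] Y} (h : ∀ s, F (B.delta s) = G (B.delta s)) : F = G := by
  ext a
  refine ((B.hasSum_coeff a).mapL F).unique ?_
  simpa [h] using (B.hasSum_coeff a).mapL G

theorem ext_delta₂ {F G : A →L[ℂ] A →L[ℂ] Y}
    (h : ∀ s t, F (B.delta s) (B.delta t) = G (B.delta s) (B.delta t)) : F = G :=
  B.ext_delta fun s => B.ext_delta (h s)

variable {x : S → Y} {C : ℝ}

theorem norm_coeff_smul_le (hx : ∀ s, ‖x s‖ ≤ C * ω s) (a : A) (s : S) :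
    ‖B.coeff a s • x s‖ ≤ C * (‖B.coeff a s‖ * ω s) :=
  calc ‖B.coeff a s • x s‖ = ‖B.coeff a s‖ * ‖x s‖ := norm_smul _ _
    _ ≤ ‖B.coeff a s‖ * (C * ω s) := by gcongr; exact hx s
    _ = C * (‖B.coeff a s‖ * ω s) := by ring

variable [CompleteSpace Y]

theorem summable_coeff_smul (hx : ∀ s, ‖x s‖ ≤ C * ω s) (a : A) :
    Summable fun s => B.coeff a s • x s :=
  .of_norm_bounded ((B.hasSum_norm_coeff_mul a).summable.mul_left C) (B.norm_coeff_smul_le hx a)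

variable (x C) in
noncomputable def lift (hx : ∀ s, ‖x s‖ ≤ C * ω s) : A →L[ℂ] Y :=
  LinearMap.mkContinuous
    { toFun := fun a => ∑' s, B.coeff a s • x s
      map_add' := fun a b => by
        simp only [map_add, Pi.add_apply, add_smul]
        exact (B.summable_coeff_smul hx a).tsum_add (B.summable_coeff_smul hx b)
      map_smul' := fun c a => by
        simp only [map_smul, Pi.smul_apply, smul_eq_mul, mul_smul, RingHom.id_apply]
        exact (B.summable_coeff_smul hx a).tsum_const_smul c }
    C fun a => tsum_of_norm_bounded ((B.hasSum_norm_coeff_mul a).mul_left C)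
      (B.norm_coeff_smul_le hx a)

theorem lift_delta (hx : ∀ s, ‖x s‖ ≤ C * ω s) (s : S) : B.lift x C hx (B.delta s) = x s := by
  simp [lift, B.coeff_delta]

end BeurlingStructure

theorem BeurlingStructure.isBiprojective_of_diagonal {S : Type*} [Mul S] {ω : S → ℝ}
    {A : Type} [NormedRing A] [NormedAlgebra ℂ A] [CompleteSpace A]
    (B : BeurlingStructure S ω A) (x : S → ProjTensor A A) (C : ℝ)
    (hx : ∀ s, ‖x s‖ ≤ C * ω s)
    (hl : ∀ s t, ProjTensor.mulLeft (B.delta s) (x t) = x (s * t))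
    (hr : ∀ s t, ProjTensor.mulRight (B.delta t) (x s) = x (s * t))
    (hπ : ∀ s, ProjTensor.mul (x s) = B.delta s) : IsBiprojective A := by
  set ρ := B.lift x C hx
  have hρ : (ContinuousLinearMap.compL ℂ A A _ ρ).comp (ContinuousLinearMap.mul ℂ A)
      = ((ContinuousLinearMap.compL ℂ A _ _).flip ρ).comp ProjTensor.mulLeft :=
    B.ext_delta₂ fun s t => by simp [ρ, B.delta_mul, B.lift_delta, hl]
  have hρ' : (ContinuousLinearMap.compL ℂ A A _ ρ).comp (ContinuousLinearMap.mul ℂ A)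
      = ProjTensor.mulRight.flip.comp ρ :=
    B.ext_delta₂ fun s t => by simp [ρ, B.delta_mul, B.lift_delta, hr]
  have hπρ : ProjTensor.mul.comp ρ = ContinuousLinearMap.id ℂ A :=
    B.ext_delta fun s => by simp [ρ, B.lift_delta, hπ]
  exact isBiprojective_of_splitting ρ (fun a b => congr($hρ a b)) (fun a b => congr($hρ' a b))
    (fun a => congr($hπρ a))

theorem stmt7_general (L R : Type) [Mul L] [Mul R]
    (hL : ∀ s t : L, s * t = s) (hR : ∀ s t : R, s * t = t)
    (ωL : L → ℝ) (ωR : R → ℝ)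
    (A : Type) [NormedRing A] [NormedAlgebra ℂ A] [CompleteSpace A]
    (B : BeurlingStructure (L × R) (fun p => ωL p.1 * ωR p.2) A) :
    IsBiprojective A := by
  have hmul (s t : L × R) : s * t = (s.1, t.2) := Prod.ext (hL _ _) (hR _ _)
  rcases isEmpty_or_nonempty (L × R) with _ | ⟨l₀, r₀⟩
  · exact B.isBiprojective_of_diagonal isEmptyElim 0 isEmptyElim isEmptyElim isEmptyElim
      isEmptyElim
  refine B.isBiprojective_of_diagonal
    (fun s => ProjTensor.incl (B.delta (s.1, r₀) ⊗ₜ B.delta (l₀, s.2))) (ωL l₀ * ωR r₀)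
    (fun s => ?_) (fun s t => ?_) (fun s t => ?_) (fun s => ?_)
  · calc _ ≤ ‖B.delta (s.1, r₀)‖ * ‖B.delta (l₀, s.2)‖ :=
          (ProjTensor.norm_incl _).trans_le (projNorm_tmul_le _ _)
      _ = _ := by simp only [B.norm_delta]; ring
  · simp [ProjTensor.mulLeft_incl_tmul, B.delta_mul, hmul]
  · simp [ProjTensor.mulRight_incl_tmul, B.delta_mul, hmul]
  · simp [ProjTensor.mul_incl_tmul, B.delta_mul, hmul]

/-- For a rectangular band `S ≅ L × R` (`L` left zero, `R` right zero)
with separable weight `ω = ω_L ⊗ ω_R`, `ℓ¹(S,ω)` is biprojective. -/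
theorem stmt7 (L R : Type) [Mul L] [Mul R]
    (hL : ∀ s t : L, s * t = s) (hR : ∀ s t : R, s * t = t)
    (ωL : L → ℝ) (ωR : R → ℝ) (hωL : IsWeight ωL) (hωR : IsWeight ωR)
    (A : Type) [NormedRing A] [NormedAlgebra ℂ A] [CompleteSpace A]
    (B : BeurlingStructure (L × R) (fun p => ωL p.1 * ωR p.2) A) :
    IsBiprojective A :=
  stmt7_general L R hL hR ωL ωR A B
end

section
/- Let S be a rectangular band semigroup with separable weight ω = ω_L ⊗ ω_R on S ≅ L × R. Then ℓ¹(S, ω) is pseudo-amenable if and only if S is a singleton. -/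
open scoped TensorProduct
open Filter
open scoped Classical

/-!
A pseudo-amenable Banach algebra has a two-sided approximate identity: the images `π(mᵢ)` of an
approximate diagonal are a right approximate identity by definition, and they approximately
commute with every `a` because `‖a π(m) - π(m) a‖ ≤ ‖a·m - m·a‖_π`. In `ℓ¹(S, ω)` such an
approximate identity separates the points of `S` from both sides: if `s₁ t = s₂ t` for all `t`,
then `δ_{s₁} a = δ_{s₂} a` for all `a`, so `δ_{s₁} = δ_{s₂}` and `s₁ = s₂`. In a rectangular band
`(l, r)` and `(l', r)` have the same left multiples, and `(l, r)`, `(l, r')` the same right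
multiples, so `L × R` has at most one point. Conversely, if `S` has at most one point, `ℓ¹(S, ω)`
is `ℂ e` for an idempotent `e` (`e = 0` when `S` is empty), and `e ⊗ e` is a diagonal.
-/

open Topology

section TensorProduct

variable {A : Type*} [NormedRing A] [NormedAlgebra ℂ A]

lemma projNorm_zero_s14 (E F : Type*) [NormedAddCommGroup E] [NormedSpace ℂ E]
    [NormedAddCommGroup F] [NormedSpace ℂ F] : projNorm E F 0 = 0 := by
  have hnonneg : ∀ r ∈ {r : ℝ | ∃ (n : ℕ) (f : Fin n → E) (g : Fin n → F),
      (0 : E ⊗[ℂ] F) = ∑ i, f i ⊗ₜ[ℂ] g i ∧ r = ∑ i, ‖f i‖ * ‖g i‖}, 0 ≤ r := by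
    rintro r ⟨n, f, g, -, rfl⟩
    exact Finset.sum_nonneg fun i _ => mul_nonneg (norm_nonneg _) (norm_nonneg _)
  refine le_antisymm (csInf_le ⟨0, hnonneg⟩ ⟨0, ![], ![], by simp, by simp⟩)
    (Real.sInf_nonneg hnonneg)

lemma norm_mul'_le_projNorm (u : A ⊗[ℂ] A) : ‖LinearMap.mul' ℂ A u‖ ≤ projNorm A A u := by
  apply le_csInf
  · obtain ⟨S, rfl⟩ := TensorProduct.exists_finset u
    refine ⟨_, S.card, fun i => (S.equivFin.symm i).1.1, fun i => (S.equivFin.symm i).1.2,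
      ?_, rfl⟩
    rw [← Finset.sum_coe_sort S]
    exact (Equiv.sum_comp S.equivFin.symm (fun p => p.1.1 ⊗ₜ[ℂ] p.1.2)).symm
  · rintro r ⟨n, f, g, rfl, rfl⟩
    calc ‖LinearMap.mul' ℂ A (∑ i, f i ⊗ₜ[ℂ] g i)‖ = ‖∑ i, f i * g i‖ := by
          simp only [map_sum, LinearMap.mul'_apply]
      _ ≤ ∑ i, ‖f i * g i‖ := norm_sum_le _ _
      _ ≤ ∑ i, ‖f i‖ * ‖g i‖ := Finset.sum_le_sum fun i _ => norm_mul_le _ _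

lemma mul'_tmulLeft (a : A) (u : A ⊗[ℂ] A) :
    LinearMap.mul' ℂ A (tmulLeft a u) = a * LinearMap.mul' ℂ A u := by
  induction u using TensorProduct.induction_on with
  | zero => simp
  | tmul x y => simp [tmulLeft, mul_assoc]
  | add x y hx hy => simp only [map_add, hx, hy, mul_add]

lemma mul'_tmulRight (a : A) (u : A ⊗[ℂ] A) :
    LinearMap.mul' ℂ A (tmulRight a u) = LinearMap.mul' ℂ A u * a := by
  induction u using TensorProduct.induction_on with
  | zero => simp
  | tmul x y => simp [tmulRight, mul_assoc]
  | add x y hx hy => simp only [map_add, hx, hy, add_mul]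

end TensorProduct

section PseudoAmenable

variable {A : Type*} [NormedRing A] [NormedAlgebra ℂ A]

lemma IsPseudoAmenable.exists_isApproximateUnit (h : IsPseudoAmenable A) :
    ∃ l : Filter A, l.IsApproximateUnit := by
  obtain ⟨ι, l, hl, m, hcomm, hright⟩ := h
  let e : ι → A := fun i => LinearMap.mul' ℂ A (m i)
  have hright' : ∀ a : A, Tendsto (fun i => a * e i) l (𝓝 a) := hright
  have hcomm' : ∀ a : A, Tendsto (fun i => a * e i - e i * a) l (𝓝 0) := fun a => by
    refine squeeze_zero_norm (fun i => ?_) (hcomm a)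
    rw [← mul'_tmulLeft, ← mul'_tmulRight, ← map_sub]
    exact norm_mul'_le_projNorm _
  refine ⟨l.map e, { tendsto_mul_left := fun a => tendsto_map'_iff.2 (hright' a)
                     tendsto_mul_right := fun a => tendsto_map'_iff.2 ?_ }⟩
  simpa only [sub_sub_cancel, sub_zero, Function.comp_def] using (hright' a).sub (hcomm' a)

lemma isPseudoAmenable_of_forall_eq_smul {e : A} (he : e * e = e)
    (h : ∀ a : A, ∃ c : ℂ, a = c • e) : IsPseudoAmenable A := by
  refine ⟨Unit, ⊤, inferInstance, fun _ => e ⊗ₜ[ℂ] e, fun a => ?_, fun a => ?_⟩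
  · obtain ⟨c, rfl⟩ := h a
    have hdiag : tmulLeft (c • e) (e ⊗ₜ[ℂ] e) = tmulRight (c • e) (e ⊗ₜ[ℂ] e) := by
      simp [tmulLeft, tmulRight, he, TensorProduct.smul_tmul]
    simp only [hdiag, sub_self, projNorm_zero_s14, tendsto_const_nhds]
  · obtain ⟨c, rfl⟩ := h a
    simp only [LinearMap.mul'_apply, he, smul_mul_assoc, tendsto_const_nhds]

end PseudoAmenable

lemma Filter.IsApproximateUnit.eq_of_forall_mul_eq {α : Type*} [TopologicalSpace α] [T2Space α]
    [Mul α] {l : Filter α} (hl : l.IsApproximateUnit) {x y : α} (h : ∀ z, x * z = y * z) :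
    x = y :=
  haveI := hl.neBot
  tendsto_nhds_unique (hl.tendsto_mul_left x) (by simpa only [h] using hl.tendsto_mul_left y)

lemma Filter.IsApproximateUnit.eq_of_forall_mul_eq' {α : Type*} [TopologicalSpace α] [T2Space α]
    [Mul α] {l : Filter α} (hl : l.IsApproximateUnit) {x y : α} (h : ∀ z, z * x = z * y) :
    x = y :=
  haveI := hl.neBot
  tendsto_nhds_unique (hl.tendsto_mul_right x) (by simpa only [h] using hl.tendsto_mul_right y)

namespace BeurlingStructure

variable {S : Type*} [Mul S] {ω : S → ℝ} {A : Type*} [NormedRing A] [NormedAlgebra ℂ A]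

lemma delta_injective (B : BeurlingStructure S ω A) : Function.Injective B.delta :=
  fun s t hst => by
    have h := B.coeff_delta t s
    rw [← hst, B.coeff_delta s s] at h
    by_contra hne
    simp [hne] at h

lemma continuousLinearMap_ext (B : BeurlingStructure S ω A) {E : Type*} [NormedAddCommGroup E]
    [NormedSpace ℂ E] {T₁ T₂ : A →L[ℂ] E} (h : ∀ s, T₁ (B.delta s) = T₂ (B.delta s)) :
    T₁ = T₂ :=
  ContinuousLinearMap.ext fun a => by
    refine ((B.hasSum_coeff a).mapL T₁).unique ?_
    simpa only [map_smul, h] using (B.hasSum_coeff a).mapL T₂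

lemma delta_mul_eq_delta_mul (B : BeurlingStructure S ω A) {s₁ s₂ : S} (h : ∀ t, s₁ * t = s₂ * t)
    (a : A) : B.delta s₁ * a = B.delta s₂ * a :=
  DFunLike.congr_fun (x := a) <|
    B.continuousLinearMap_ext (T₁ := ContinuousLinearMap.mul ℂ A (B.delta s₁))
      (T₂ := ContinuousLinearMap.mul ℂ A (B.delta s₂)) fun t => by simp [B.delta_mul, h t]

lemma mul_delta_eq_mul_delta (B : BeurlingStructure S ω A) {s₁ s₂ : S} (h : ∀ t, t * s₁ = t * s₂)
    (a : A) : a * B.delta s₁ = a * B.delta s₂ :=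
  DFunLike.congr_fun (x := a) <|
    B.continuousLinearMap_ext (T₁ := (ContinuousLinearMap.mul ℂ A).flip (B.delta s₁))
      (T₂ := (ContinuousLinearMap.mul ℂ A).flip (B.delta s₂))
      fun t => by simp [B.delta_mul, h t]

lemma eq_of_forall_mul_eq (B : BeurlingStructure S ω A) {l : Filter A} (hl : l.IsApproximateUnit)
    {s₁ s₂ : S} (h : ∀ t, s₁ * t = s₂ * t) : s₁ = s₂ :=
  B.delta_injective (hl.eq_of_forall_mul_eq (B.delta_mul_eq_delta_mul h))

lemma eq_of_forall_mul_eq' (B : BeurlingStructure S ω A) {l : Filter A} (hl : l.IsApproximateUnit)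
    {s₁ s₂ : S} (h : ∀ t, t * s₁ = t * s₂) : s₁ = s₂ :=
  B.delta_injective (hl.eq_of_forall_mul_eq' (B.mul_delta_eq_mul_delta h))

lemma exists_idempotent_forall_eq_smul [Subsingleton S] (B : BeurlingStructure S ω A) :
    ∃ e : A, e * e = e ∧ ∀ a : A, ∃ c : ℂ, a = c • e := by
  rcases isEmpty_or_nonempty S with hS | ⟨⟨s₀⟩⟩
  · exact ⟨0, mul_zero 0, fun a => ⟨0, by simpa using (B.hasSum_coeff a).unique hasSum_empty⟩⟩
  · refine ⟨B.delta s₀, by rw [B.delta_mul, Subsingleton.elim (s₀ * s₀) s₀], fun a =>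
      ⟨B.coeff a s₀, (B.hasSum_coeff a).unique (hasSum_single s₀ fun s hs => ?_)⟩⟩
    exact absurd (Subsingleton.elim s s₀) hs

end BeurlingStructure

lemma BeurlingStructure.subsingleton_of_isRectangularBand {L R : Type*} [Mul L] [Mul R]
    (hL : ∀ s t : L, s * t = s) (hR : ∀ s t : R, s * t = t) {ω : L × R → ℝ} {A : Type*}
    [NormedRing A] [NormedAlgebra ℂ A] (B : BeurlingStructure (L × R) ω A) {l : Filter A}
    (hl : l.IsApproximateUnit) : Subsingleton (L × R) := by
  refine ⟨fun p q => ?_⟩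
  have hleft : (p.1, p.2) = (q.1, p.2) :=
    B.eq_of_forall_mul_eq' hl fun t => Prod.ext (by simp only [Prod.fst_mul, hL]) rfl
  have hright : (q.1, p.2) = (q.1, q.2) :=
    B.eq_of_forall_mul_eq hl fun t => Prod.ext rfl (by simp only [Prod.snd_mul, hR])
  exact hleft.trans hright

theorem stmt14_general (L R : Type) [Mul L] [Mul R]
    (hL : ∀ s t : L, s * t = s) (hR : ∀ s t : R, s * t = t)
    (ωL : L → ℝ) (ωR : R → ℝ)
    (A : Type) [NormedRing A] [NormedAlgebra ℂ A]
    (B : BeurlingStructure (L × R) (fun p => ωL p.1 * ωR p.2) A) :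
    IsPseudoAmenable A ↔ Subsingleton (L × R) := by
  refine ⟨fun h => ?_, fun _ => ?_⟩
  · obtain ⟨l, hl⟩ := h.exists_isApproximateUnit
    exact B.subsingleton_of_isRectangularBand hL hR hl
  · obtain ⟨e, he, hA⟩ := B.exists_idempotent_forall_eq_smul
    exact isPseudoAmenable_of_forall_eq_smul he hA

/-- For a rectangular band `S ≅ L × R` with separable weight
`ω = ω_L ⊗ ω_R`, `ℓ¹(S,ω)` is pseudo-amenable iff `S` is a singleton. -/
theorem stmt14 (L R : Type) [Mul L] [Mul R] [Nonempty L] [Nonempty R]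
    (hL : ∀ s t : L, s * t = s) (hR : ∀ s t : R, s * t = t)
    (ωL : L → ℝ) (ωR : R → ℝ) (hωL : IsWeight ωL) (hωR : IsWeight ωR)
    (A : Type) [NormedRing A] [NormedAlgebra ℂ A] [CompleteSpace A]
    (B : BeurlingStructure (L × R) (fun p => ωL p.1 * ωR p.2) A) :
    IsPseudoAmenable A ↔ Subsingleton (L × R) :=
  stmt14_general L R hL hR ωL ωR A B
end
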